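/- arXiv:2110.08008 — 4 statements merged into one kernel-verified Lean document; each statement's English description precedes it below -/
import Mathlib

section
/- For all real numbers ε and x with 0 < ε < 1/2 and 0 < x ≤ 1 - ε, the inequality log(x+ε)/log(x) ≤ (1-ε)² holds. -/
/-!
Since `log x < 0`, the claim is `x ^ a ≤ x + ε` for `a = (1 - ε) ^ 2`. By weighted AM-GM
(concavity of `x ↦ x ^ a`), `x ^ a - x` is at most its maximum `(1 - a) * a ^ (a / (1 - a))`,
and with `1 - a = ε (2 - ε)` this is at most `ε` iff `(2 - ε) * a ^ (a / (1 - a)) ≤ 1`.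
Taking logarithms, this follows from `log (1 - u) ≤ -u - u² / 2` and `log 2 < 0.6931471808`.
-/

open Real

theorem Real.log_one_sub_le_neg_sub_sq_div_two {u : ℝ} (h0 : 0 ≤ u) (h1 : u < 1) :
    log (1 - u) ≤ -u - u ^ 2 / 2 := by
  have hsum := hasSum_pow_div_log_of_abs_lt_one (abs_lt.2 ⟨by linarith, h1⟩)
  have h := sum_le_hasSum (Finset.range 2) (fun n _ => by positivity) hsum
  norm_num [Finset.sum_range_succ] at h
  linarith

/-- AM-GM with weights `a, 1 - a` applied to `x` and `c = a ^ (1 / (1 - a))`, the maximiser of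
`x ^ a - x`. -/
theorem Real.rpow_le_self_add {a x : ℝ} (ha0 : 0 < a) (ha1 : a < 1) (hx : 0 ≤ x) :
    x ^ a ≤ x + (1 - a) * a ^ (a / (1 - a)) := by
  have hδ : 0 < 1 - a := by linarith
  set c := a ^ (1 / (1 - a)) with hc
  have hc_pow : c ^ (1 - a) = a := by
    rw [hc, ← rpow_mul ha0.le, one_div_mul_cancel hδ.ne', rpow_one]
  have hc_div : a ^ (a / (1 - a)) = c / a := by
    rw [eq_div_iff ha0.ne', hc, ← rpow_add_one ha0.ne']
    congr 1; field_simp; ring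
  have hamgm : x ^ a * c ^ (1 - a) ≤ a * x + (1 - a) * c :=
    geom_mean_le_arith_mean2_weighted ha0.le hδ.le hx (rpow_pos_of_pos ha0 _).le
      (add_sub_cancel a 1)
  rw [hc_pow] at hamgm
  rw [hc_div, show x + (1 - a) * (c / a) = (a * x + (1 - a) * c) / a by field_simp,
    le_div_iff₀ ha0]
  exact hamgm

theorem log_two_sub_le {ε : ℝ} (h0 : 0 ≤ ε) (h1 : ε < 2) :
    log (2 - ε) ≤ log 2 - ε / 2 - ε ^ 2 / 8 := by
  have h := log_one_sub_le_neg_sub_sq_div_two (u := ε / 2) (by linarith) (by linarith)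
  rw [show 2 - ε = 2 * (1 - ε / 2) by ring, log_mul two_ne_zero (by linarith)]
  linarith

theorem log_two_sub_le_mul_div {ε : ℝ} (hε : 0 < ε) (hε2 : ε < 1 / 2) :
    log (2 - ε) ≤ (1 - ε) ^ 2 * (2 + ε) / (2 - ε) := by
  rw [le_div_iff₀ (by linarith)]
  have := log_two_sub_le hε.le (by linarith)
  -- the margin at `ε = 1 / 2` is below `0.01`, so `log 2` is needed to three decimals
  nlinarith [log_two_lt_d9, sq_nonneg (ε - 1/2), mul_pos hε (mul_pos hε hε)]

theorem one_sub_sq_rpow_le {ε : ℝ} (hε : 0 < ε) (hε2 : ε < 1 / 2) :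
    ((1 - ε) ^ 2) ^ ((1 - ε) ^ 2 / (ε * (2 - ε))) ≤ (2 - ε)⁻¹ := by
  have h2ε : 0 < 2 - ε := by linarith
  have hlog : (1 - ε) ^ 2 / (ε * (2 - ε)) * log ((1 - ε) ^ 2) ≤ log (2 - ε)⁻¹ :=
    calc (1 - ε) ^ 2 / (ε * (2 - ε)) * log ((1 - ε) ^ 2)
        = (1 - ε) ^ 2 / (ε * (2 - ε)) * (2 * log (1 - ε)) := by rw [log_pow]; push_cast; ring
      _ ≤ (1 - ε) ^ 2 / (ε * (2 - ε)) * (2 * (-ε - ε ^ 2 / 2)) := by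
          gcongr; exact log_one_sub_le_neg_sub_sq_div_two hε.le (by linarith)
      _ = -((1 - ε) ^ 2 * (2 + ε) / (2 - ε)) := by field_simp; ring
      _ ≤ log (2 - ε)⁻¹ := by rw [log_inv]; linarith [log_two_sub_le_mul_div hε hε2]
  rw [← exp_log (inv_pos.2 h2ε), rpow_def_of_pos (by nlinarith)]
  exact exp_le_exp.2 (by linarith [hlog])

theorem stmt1 (ε x : ℝ) (hε : 0 < ε) (hε2 : ε < 1/2) (hx : 0 < x) (hxe : x ≤ 1 - ε) :
    Real.log (x + ε) / Real.log x ≤ (1 - ε)^2 := by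
  have hδ : 1 - (1 - ε) ^ 2 = ε * (2 - ε) := by ring
  have hpow : x ^ (1 - ε) ^ 2 ≤ x + ε :=
    calc x ^ (1 - ε) ^ 2
        ≤ x + (1 - (1 - ε) ^ 2) * ((1 - ε) ^ 2) ^ ((1 - ε) ^ 2 / (1 - (1 - ε) ^ 2)) :=
          rpow_le_self_add (by nlinarith) (by nlinarith) hx.le
      _ ≤ x + ε * (2 - ε) * (2 - ε)⁻¹ := by
          rw [hδ]; gcongr
          · nlinarith
          · exact one_sub_sq_rpow_le hε hε2
      _ = x + ε := by rw [mul_inv_cancel_right₀ (by linarith)]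
  rw [div_le_iff_of_neg (log_neg hx (by linarith)), ← log_rpow hx]
  exact log_le_log (rpow_pos_of_pos hx _) hpow
end

section
/- Let G₀ be a graph, k ≥ 1 an integer, and G₀(k) the balanced blowup of G₀. If a graph H has a model (V_h)_{h ∈ V(H)} in G₀(k), then H has a model (W_h) in G₀(k) such that for every h ∈ V(H) and every vertex v of G₀, the set W_h contains at most one vertex of the independent set I_v corresponding to v. -/
/-- The balanced blowup `G₀(k)`: each vertex `v` is replaced by the independent set
`{v} × Fin k`, with `(v,i)` adjacent to `(w,j)` iff `v` and `w` are adjacent in `G₀`. -/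
def blowup {V : Type*} (G : SimpleGraph V) (k : ℕ) : SimpleGraph (V × Fin k) :=
  G.comap Prod.fst

/-- `f` is a model of `H` in `G`: pairwise disjoint nonempty connected branch sets with
edges of `G` between the branch sets of adjacent vertices of `H`. -/
def IsModel {V W : Type*} (G : SimpleGraph V) (H : SimpleGraph W) (f : W → Set V) : Prop :=
  (∀ w, (f w).Nonempty) ∧
  (Pairwise fun w w' => Disjoint (f w) (f w')) ∧
  (∀ w, (G.induce (f w)).Connected) ∧
  ∀ w w', H.Adj w w' → ∃ a ∈ f w, ∃ b ∈ f w', G.Adj a b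

/-- any model of `H` in the balanced blowup `G₀(k)` can be replaced by a
model using at most one vertex from each independent set `I_v`. -/
theorem stmt8 {V W : Type*} (G₀ : SimpleGraph V) (k : ℕ) (hk : 1 ≤ k)
    (H : SimpleGraph W) (f : W → Set (V × Fin k))
    (hf : IsModel (blowup G₀ k) H f) :
    ∃ g : W → Set (V × Fin k), IsModel (blowup G₀ k) H g ∧
      ∀ (h : W) (v : V), ({i : Fin k | (v, i) ∈ g h}).Subsingleton := by
  classical
  obtain ⟨hne, hdisj, hconn, hadj⟩ := hf
  -- choose a representative index for each (h, v) with nonempty fiber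
  set rep : W → V → Fin k := fun h v =>
    if hv : ∃ i, (v, i) ∈ f h then hv.choose else ⟨0, hk⟩ with hrep
  have hrep_mem : ∀ h v, (∃ i, (v, i) ∈ f h) → (v, rep h v) ∈ f h := by
    intro h v hv
    simp only [hrep, dif_pos hv]
    exact hv.choose_spec
  set g : W → Set (V × Fin k) := fun h => {p | p ∈ f h ∧ p.2 = rep h p.1} with hg
  have hsub : ∀ h, g h ⊆ f h := fun h p hp => hp.1
  have hmem : ∀ h (p : V × Fin k), p ∈ f h → (p.1, rep h p.1) ∈ g h := by
    intro h p hp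
    exact ⟨hrep_mem h p.1 ⟨p.2, hp⟩, rfl⟩
  refine ⟨g, ⟨?_, ?_, ?_, ?_⟩, ?_⟩
  · intro w
    obtain ⟨p, hp⟩ := hne w
    exact ⟨(p.1, rep w p.1), hmem w p hp⟩
  · intro w w' hww'
    exact (hdisj hww').mono (hsub w) (hsub w')
  · intro w
    refine SimpleGraph.Connected.map
      (f := ⟨fun p => ⟨(p.1.1, rep w p.1.1), hmem w p.1 p.2⟩, ?_⟩) ?_ (hconn w)
    · intro a b hab
      exact hab
    · rintro ⟨q, hq1, hq2⟩
      refine ⟨⟨q, hq1⟩, ?_⟩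
      exact Subtype.ext (Prod.ext rfl hq2.symm)
  · intro w w' hww'
    obtain ⟨a, ha, b, hb, hab⟩ := hadj w w' hww'
    exact ⟨(a.1, rep w a.1), hmem w a ha, (b.1, rep w' b.1), hmem w' b hb, hab⟩
  · intro h v i hi j hj
    simp only [hg, Set.mem_setOf_eq] at hi hj
    exact hi.2.trans hj.2.symm
end

section
/- Let 0 < p < 1, let G be the Erdős–Rényi random graph G(d, p) on d labelled vertices, fix a vertex v of degree (1−q_v)(d−1) (i.e. with q_v·(d−1) non-neighbours), partition the other vertices into l blocks of equal size x (so d = l·x possibly after rounding), and choose a random set W consisting of b uniformly random vertices from each block. Then the probability that W contains no neighbour of v and avoids v is at most q_v^{l·b}. -/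
open Finset

-- auxiliary: descFactorial inequality
lemma descFac_pow_le (s x b : ℕ) (hsx : s ≤ x) :
    s.descFactorial b * x ^ b ≤ x.descFactorial b * s ^ b := by
  induction b with
  | zero => simp
  | succ n ih =>
    rw [Nat.descFactorial_succ, Nat.descFactorial_succ, pow_succ, pow_succ]
    have h1 : (s - n) * x ≤ (x - n) * s := by
      rw [Nat.sub_mul, Nat.sub_mul]
      exact tsub_le_tsub (le_of_eq (mul_comm s x)) (Nat.mul_le_mul (le_refl n) hsx)
    calc (s - n) * s.descFactorial n * (x ^ n * x)
        = ((s - n) * x) * (s.descFactorial n * x ^ n) := by ring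
      _ ≤ ((x - n) * s) * (x.descFactorial n * s ^ n) :=
          Nat.mul_le_mul h1 ih
      _ = (x - n) * x.descFactorial n * (s ^ n * s) := by ring

lemma choose_pow_le (s x b : ℕ) (hsx : s ≤ x) :
    s.choose b * x ^ b ≤ x.choose b * s ^ b := by
  have := descFac_pow_le s x b hsx
  rw [Nat.descFactorial_eq_factorial_mul_choose, Nat.descFactorial_eq_factorial_mul_choose] at this
  rw [mul_assoc, mul_assoc] at this
  exact Nat.le_of_mul_le_mul_left this (Nat.factorial_pos b)

lemma choose_ratio_le (s x b : ℕ) (hsx : s ≤ x) (hb : b ≤ x) (hx : 0 < x) :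
    (s.choose b : ℝ) / (x.choose b : ℝ) ≤ ((s : ℝ) / x) ^ b := by
  have hc : 0 < (x.choose b : ℝ) := by exact_mod_cast Nat.choose_pos hb
  have hxp : (0:ℝ) < (x:ℝ) ^ b := by positivity
  rw [div_pow, div_le_div_iff₀ hc hxp]
  have h : (s.choose b : ℝ) * x ^ b ≤ x.choose b * s ^ b := by
    exact_mod_cast choose_pow_le s x b hsx
  linarith [h, mul_comm ((x.choose b : ℝ)) ((s:ℝ) ^ b)]

-- AM–GM: product ≤ (mean)^card
lemma prod_le_mean_pow {l : ℕ} (hl : 0 < l) (z : Fin l → ℝ) (hz : ∀ i, 0 ≤ z i) :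
    ∏ i, z i ≤ ((∑ i, z i) / l) ^ l := by
  have hw : ∀ i ∈ (univ : Finset (Fin l)), (0:ℝ) ≤ 1 / l := fun _ _ => by positivity
  have hw' : ∑ _i : Fin l, (1:ℝ) / l = 1 := by
    simp [Finset.sum_const, card_univ]
    field_simp
  have H := Real.geom_mean_le_arith_mean_weighted univ (fun _ => 1 / l) z hw hw'
      (fun i _ => hz i)
  have hprod : ∏ i, z i ^ ((1:ℝ)/l) = (∏ i, z i) ^ ((1:ℝ)/l) := by
    rw [← Real.finset_prod_rpow _ _ (fun i _ => hz i)]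
  rw [hprod] at H
  have hP : 0 ≤ ∏ i, z i := Finset.prod_nonneg fun i _ => hz i
  have hmono := Real.rpow_le_rpow (Real.rpow_nonneg hP _) H (by positivity : (0:ℝ) ≤ (l:ℝ))
  rw [← Real.rpow_mul hP,
      one_div, inv_mul_cancel₀ (by exact_mod_cast hl.ne' : (l:ℝ) ≠ 0), Real.rpow_one] at hmono
  refine hmono.trans_eq ?_
  rw [Real.rpow_natCast]
  congr 1
  rw [← Finset.mul_sum]
  field_simp
/-- fix a vertex `v` of a graph on `d = l·x` vertices with `q·(d−1)`
non-neighbours, partition the vertices into `l` blocks of size `x`, and choose `W` as a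
union of uniformly random `b`-subsets of the blocks (chosen independently). The
probability that `W` avoids `v` and all neighbours of `v` — expressed as the product
over blocks of the proportion of `b`-subsets of each block consisting of non-neighbours
of `v` (other than `v`) — is at most `q^{l·b}`. -/
theorem stmt15 (d l x b : ℕ) (hd : d = l * x) (hb : b ≤ x) (hx : 0 < x) (hl : 0 < l)
    (hd2 : 2 ≤ d)
    (G : SimpleGraph (Fin d)) [DecidableRel G.Adj] (v : Fin d) (q : ℝ)
    (S : Finset (Fin d)) (hS : S = Finset.univ.filter (fun w => w ≠ v ∧ ¬ G.Adj v w))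
    (hq : (S.card : ℝ) = q * ((d : ℝ) - 1))
    (B : Fin l → Finset (Fin d)) (hcard : ∀ i, (B i).card = x)
    (hpart : ∀ w : Fin d, ∃! i, w ∈ B i) :
    (∏ i, ((((B i).filter (· ∈ S)).powersetCard b).card : ℝ) /
        (((B i).powersetCard b).card : ℝ))
      ≤ q ^ (l * b) := by
  set f : Fin l → ℕ := fun i => ((B i).filter (· ∈ S)).card with hf
  have hfx : ∀ i, f i ≤ x := fun i => (Finset.card_filter_le _ _).trans_eq (hcard i)
  -- q is nonnegative
  have hd1 : (1:ℝ) ≤ (d:ℝ) := by exact_mod_cast Nat.one_le_of_lt hd2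
  have hdpos : (0:ℝ) < (d:ℝ) - 1 := by
    have : (2:ℝ) ≤ (d:ℝ) := by exact_mod_cast hd2
    linarith
  have hq0 : 0 ≤ q := by
    by_contra hneg
    push_neg at hneg
    have : (S.card : ℝ) < 0 := by
      rw [hq]; exact mul_neg_of_neg_of_pos hneg hdpos
    have h0 : (0:ℝ) ≤ (S.card : ℝ) := by positivity
    linarith
  -- sum of block intersections equals |S|
  have hsum : ∑ i, f i = S.card := by
    have h1 : ∀ i, f i = (S.filter (· ∈ B i)).card := by
      intro i
      rw [hf]
      simp only
      rw [Finset.filter_mem_eq_inter, Finset.filter_mem_eq_inter, Finset.inter_comm]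
    simp only [h1, Finset.card_filter]
    rw [Finset.sum_comm]
    have h2 : ∀ w : Fin d, (∑ i : Fin l, if w ∈ B i then 1 else 0) = 1 := by
      intro w
      rw [← Finset.card_filter]
      rw [Finset.card_eq_one]
      obtain ⟨i, hi, huniq⟩ := hpart w
      refine ⟨i, ?_⟩
      ext j
      simp only [Finset.mem_filter, Finset.mem_univ, true_and, Finset.mem_singleton]
      exact ⟨fun h => huniq j h, fun h => h ▸ hi⟩
    calc (∑ w ∈ S, ∑ i : Fin l, if w ∈ B i then 1 else 0) = ∑ w ∈ S, 1 := by
          exact Finset.sum_congr rfl fun w _ => h2 w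
      _ = S.card := by simp
  -- rewrite each term via binomial coefficients and bound it
  set z : Fin l → ℝ := fun i => (f i : ℝ) / x with hz
  have hz0 : ∀ i, 0 ≤ z i := fun i => by positivity
  have hterm : ∀ i, ((((B i).filter (· ∈ S)).powersetCard b).card : ℝ) /
        (((B i).powersetCard b).card : ℝ) ≤ z i ^ b := by
    intro i
    rw [Finset.card_powersetCard, Finset.card_powersetCard, hcard i]
    exact choose_ratio_le (f i) x b (hfx i) hb hx
  have hnn : ∀ i, (0:ℝ) ≤ ((((B i).filter (· ∈ S)).powersetCard b).card : ℝ) /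
        (((B i).powersetCard b).card : ℝ) := fun i => by positivity
  calc (∏ i, ((((B i).filter (· ∈ S)).powersetCard b).card : ℝ) /
        (((B i).powersetCard b).card : ℝ))
      ≤ ∏ i, z i ^ b := Finset.prod_le_prod (fun i _ => hnn i) (fun i _ => hterm i)
    _ = (∏ i, z i) ^ b := by rw [Finset.prod_pow]
    _ ≤ (q ^ l) ^ b := by
        refine pow_le_pow_left₀ (Finset.prod_nonneg fun i _ => hz0 i) ?_ b
        have hAM := prod_le_mean_pow hl z hz0
        refine hAM.trans ?_
        refine pow_le_pow_left₀ (by positivity) ?_ l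
        -- (∑ z)/l ≤ q
        have hsz : ∑ i, z i = (S.card : ℝ) / x := by
          rw [hz]
          rw [← Finset.sum_div]
          congr 1
          exact_mod_cast hsum
        rw [hsz, hq]
        rw [div_div]
        have hdl : (x:ℝ) * l = d := by
          rw [hd]; push_cast; ring
        rw [hdl]
        rw [div_le_iff₀ (by positivity : (0:ℝ) < (d:ℝ))]
        nlinarith [hq0, hd1]
    _ = q ^ (l * b) := by rw [← pow_mul]
end

section
/- Let N, M, n be positive integers with M ≤ N and n ≤ N, and let X be a hypergeometric random variable HG(N, M, n) counting the number of marked elements in a uniformly random n-subset of an N-set with M marked elements. Then E[X] = M·n/N and for any a > 0, P(X < M·n/N − a) ≤ exp(−a²/(2·Mn/N)). -/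
/-!
Write `X s = #(s ∩ A)`. The mean follows by double counting pairs `(x, s)` with `x ∈ A ∩ s`.
For the lower tail, expand `q ^ X s = ∏ x ∈ A, (q + (1 - q) [x ∉ s])` over the subsets
`T ⊆ A`: the `n`-sets avoiding `T` number `C(N - #T, n) ≤ C(N, n) (1 - n/N) ^ #T`, so the
generating function of `X` is dominated by the binomial one,
`E q^X ≤ (1 - (1 - q) n/N) ^ M ≤ exp (-(1 - q) μ)` with `μ = M n / N`. Markov's inequality at
`q = 1 - a/μ` and `x log x ≥ (x² - 1)/2` on `[0, 1]` give `exp (-a² / (2μ))`.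
-/

open Finset

namespace Nat

lemma choose_pred_mul_le {N m : ℕ} (n : ℕ) (hm : m ≤ N) :
    (m - 1).choose n * N ≤ m.choose n * (N - n) := by
  rcases m with _ | m
  · rcases n with _ | n <;> simp
  refine Nat.le_of_mul_le_mul_right ?_ m.succ_pos
  calc m.choose n * N * (m + 1) = (m + 1).choose n * ((m + 1 - n) * N) := by
        rw [mul_right_comm, choose_mul_succ_eq, mul_assoc]
    _ ≤ (m + 1).choose n * ((N - n) * (m + 1)) := by
        refine Nat.mul_le_mul_left _ ?_
        rcases le_or_gt n (m + 1) with h | h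
        · zify [h, h.trans hm]
          nlinarith [Nat.mul_le_mul_left n hm]
        · simp [Nat.sub_eq_zero_of_le h.le]
    _ = (m + 1).choose n * (N - n) * (m + 1) := by ring

lemma choose_sub_mul_pow_le (N n k : ℕ) :
    (N - k).choose n * N ^ k ≤ N.choose n * (N - n) ^ k := by
  induction k with
  | zero => simp
  | succ k ih =>
    have hstep := choose_pred_mul_le n (Nat.sub_le N k)
    rw [Nat.sub_sub] at hstep
    calc (N - (k + 1)).choose n * N ^ (k + 1) = (N - (k + 1)).choose n * N * N ^ k := by ring
      _ ≤ (N - k).choose n * (N - n) * N ^ k := by gcongr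
      _ = (N - k).choose n * N ^ k * (N - n) := by ring
      _ ≤ N.choose n * (N - n) ^ k * (N - n) := by gcongr
      _ = N.choose n * (N - n) ^ (k + 1) := by ring

lemma cast_choose_sub_le {N n : ℕ} (k : ℕ) (hn : n ≤ N) :
    ((N - k).choose n : ℝ) ≤ N.choose n * (1 - n / N) ^ k := by
  rcases N.eq_zero_or_pos with rfl | hN
  · simp [le_zero.1 hn]
  have hN' : (0 : ℝ) < N := by exact_mod_cast hN
  have h : ((N - k).choose n : ℝ) * N ^ k ≤ N.choose n * ((N : ℝ) - n) ^ k := by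
    exact_mod_cast choose_sub_mul_pow_le N n k
  rw [one_sub_div hN'.ne', div_pow, mul_div_assoc', le_div_iff₀ (by positivity)]
  exact h

end Nat

lemma Real.sq_sub_one_div_two_le_mul_log {x : ℝ} (hx0 : 0 ≤ x) (hx1 : x ≤ 1) :
    (x ^ 2 - 1) / 2 ≤ x * Real.log x := by
  rcases hx0.eq_or_lt with rfl | hx
  · norm_num
  have hsinh := Real.self_le_sinh_iff.2 (neg_nonneg.2 (Real.log_nonpos hx0 hx1))
  rw [Real.sinh_eq, neg_neg, Real.exp_log hx, Real.exp_neg, Real.exp_log hx] at hsinh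
  have := mul_le_mul_of_nonneg_left hsinh hx0
  field_simp at this
  linarith

lemma Real.exp_neg_le_exp_mul_rpow {μ a : ℝ} (ha : 0 ≤ a) (haμ : a < μ) :
    Real.exp (-a) ≤ Real.exp (-a ^ 2 / (2 * μ)) * ((μ - a) / μ) ^ (μ - a) := by
  have hμ : 0 < μ := ha.trans_lt haμ
  set q := (μ - a) / μ with hq
  have hq0 : 0 < q := div_pos (sub_pos.2 haμ) hμ
  have hq1 : q ≤ 1 := (div_le_one hμ).2 (by linarith)
  rw [Real.rpow_def_of_pos hq0, ← Real.exp_add, Real.exp_le_exp]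
  have hlog := Real.sq_sub_one_div_two_le_mul_log hq0.le hq1
  calc -a = -a ^ 2 / (2 * μ) + μ * ((q ^ 2 - 1) / 2) := by rw [hq]; field_simp; ring
    _ ≤ -a ^ 2 / (2 * μ) + μ * (q * Real.log q) := by gcongr
    _ = -a ^ 2 / (2 * μ) + Real.log q * (μ - a) := by rw [hq]; field_simp

namespace Finset

variable {α : Type*} [Fintype α] [DecidableEq α]

lemma card_filter_powersetCard_univ_disjoint (n : ℕ) (T : Finset α) :
    #{s ∈ powersetCard n (univ : Finset α) | Disjoint T s} =
      (Fintype.card α - #T).choose n := by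
  have hfilter : {s ∈ powersetCard n (univ : Finset α) | Disjoint T s} = powersetCard n Tᶜ := by
    ext s
    simp [subset_compl_iff_disjoint_left, and_comm]
  rw [hfilter, card_powersetCard, card_compl]

lemma card_filter_powersetCard_univ_mem (n : ℕ) (a : α) :
    #{s ∈ powersetCard n (univ : Finset α) | a ∈ s} =
      (Fintype.card α).choose n - (Fintype.card α - 1).choose n := by
  have h := card_filter_add_card_filter_not (s := powersetCard n (univ : Finset α)) (fun s => a ∈ s)
  have hnot := card_filter_powersetCard_univ_disjoint n {a}
  simp only [disjoint_singleton_left, card_singleton, card_powersetCard, card_univ] at h hnot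
  omega

theorem sum_card_inter_powersetCard_univ_mul_card (n : ℕ) (A : Finset α) :
    (∑ s ∈ powersetCard n (univ : Finset α), #(s ∩ A)) * Fintype.card α =
      #A * n * (Fintype.card α).choose n := by
  -- every point lies in the same number of `n`-sets: double count both `∑ #(s ∩ A)` and `∑ #s`
  have hdeg := card_filter_powersetCard_univ_mem (α := α) n
  have hsizes : ∑ s ∈ powersetCard n (univ : Finset α), #s = (Fintype.card α).choose n * n := by
    rw [sum_congr rfl fun s hs => (mem_powersetCard.1 hs).2, sum_const, card_powersetCard,
      card_univ, smul_eq_mul]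
  simp_rw [inter_comm _ A]
  rw [sum_card_inter fun a _ => hdeg a, mul_assoc, mul_comm _ (Fintype.card α),
    ← sum_card hdeg, hsizes]
  ring

lemma pow_card_inter_eq_sum_powerset {R : Type*} [CommRing R] (q : R) (s A : Finset α) :
    q ^ #(s ∩ A) =
      ∑ T ∈ A.powerset, if Disjoint T s then (1 - q) ^ #T * q ^ (#A - #T) else 0 := by
  have hfactor : q ^ #(s ∩ A) = ∏ x ∈ A, ((if x ∉ s then 1 - q else 0) + q) := by
    rw [inter_comm, ← prod_const, ← prod_ite_mem]
    exact prod_congr rfl fun x _ => by split_ifs <;> simp_all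
  rw [hfactor, prod_add]
  refine sum_congr rfl fun T hT => ?_
  rw [prod_ite_zero, prod_const, prod_const, card_sdiff_of_subset (mem_powerset.1 hT)]
  simp only [disjoint_left, ite_mul, zero_mul]

theorem sum_pow_card_inter_le (A : Finset α) {n : ℕ} (hn : n ≤ Fintype.card α) {q : ℝ}
    (hq0 : 0 ≤ q) (hq1 : q ≤ 1) :
    ∑ s ∈ powersetCard n (univ : Finset α), q ^ #(s ∩ A) ≤
      (Fintype.card α).choose n * Real.exp (-(1 - q) * (#A * n / Fintype.card α)) := by
  set N := Fintype.card α
  have hfrac : 0 ≤ 1 - (n : ℝ) / N :=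
    sub_nonneg.2 (div_le_one_of_le₀ (by exact_mod_cast hn) N.cast_nonneg)
  have hbase : q + (1 - q) * (1 - n / N) ≤ Real.exp (-(1 - q) * (n / N)) := by
    linarith [Real.add_one_le_exp (-(1 - q) * (n / N))]
  calc ∑ s ∈ powersetCard n univ, q ^ #(s ∩ A)
      = ∑ T ∈ A.powerset, ((N - #T).choose n : ℝ) * ((1 - q) ^ #T * q ^ (#A - #T)) := by
        simp_rw [pow_card_inter_eq_sum_powerset q _ A]
        rw [sum_comm]
        refine sum_congr rfl fun T _ => ?_
        rw [← sum_filter, sum_const, card_filter_powersetCard_univ_disjoint, nsmul_eq_mul]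
    _ ≤ ∑ T ∈ A.powerset, (N.choose n * (1 - n / N) ^ #T) * ((1 - q) ^ #T * q ^ (#A - #T)) := by
        gcongr
        exact Nat.cast_choose_sub_le _ hn
    _ = N.choose n * (q + (1 - q) * (1 - n / N)) ^ #A := by
        rw [add_comm, ← sum_pow_mul_eq_add_pow, mul_sum]
        exact sum_congr rfl fun T _ => by rw [mul_pow]; ring
    _ ≤ N.choose n * Real.exp (-(1 - q) * (#A * n / N)) := by
        gcongr
        calc (q + (1 - q) * (1 - n / N)) ^ #A ≤ Real.exp (-(1 - q) * (n / N)) ^ #A := by gcongr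
          _ = _ := by rw [← Real.exp_nat_mul]; ring_nf

end Finset

theorem Finset.card_filter_lt_sub_le_of_sum_pow_le {ι : Type*} (S : Finset ι) (X : ι → ℕ)
    {μ a C : ℝ} (ha : 0 < a)
    (hpgf : ∀ q : ℝ, 0 < q → q ≤ 1 → ∑ i ∈ S, q ^ X i ≤ C * Real.exp (-(1 - q) * μ)) :
    (#{i ∈ S | (X i : ℝ) < μ - a} : ℝ) ≤ C * Real.exp (-a ^ 2 / (2 * μ)) := by
  have hC : 0 ≤ C := by
    have h := hpgf 1 one_pos le_rfl
    simp only [one_pow, sum_const, nsmul_one, sub_self, zero_mul, neg_zero, Real.exp_zero,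
      mul_one] at h
    exact (Nat.cast_nonneg _).trans h
  rcases le_or_gt μ a with hμa | haμ
  · rw [filter_eq_empty_iff.2 fun i _ => not_lt.2 ((sub_nonpos.2 hμa).trans (X i).cast_nonneg)]
    simpa using mul_nonneg hC (Real.exp_pos _).le
  have hμ : 0 < μ := ha.trans haμ
  set q := (μ - a) / μ with hq
  have hq0 : 0 < q := div_pos (sub_pos.2 haμ) hμ
  have hq1 : q ≤ 1 := (div_le_one hμ).2 (by linarith)
  have hmarkov : (#{i ∈ S | (X i : ℝ) < μ - a} : ℝ) * q ^ (μ - a) ≤ ∑ i ∈ S, q ^ X i := by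
    rw [← nsmul_eq_mul, ← sum_const]
    refine (sum_le_sum fun i hi => ?_).trans
      (sum_le_sum_of_subset_of_nonneg (filter_subset _ S) fun i _ _ => by positivity)
    rw [← Real.rpow_natCast]
    exact Real.rpow_le_rpow_of_exponent_ge hq0 hq1 (mem_filter.1 hi).2.le
  have hmean : (1 - q) * μ = a := by rw [hq]; field_simp; ring
  refine le_of_mul_le_mul_right ?_ (Real.rpow_pos_of_pos hq0 (μ - a))
  calc (#{i ∈ S | (X i : ℝ) < μ - a} : ℝ) * q ^ (μ - a) ≤ C * Real.exp (-(1 - q) * μ) :=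
        hmarkov.trans (hpgf q hq0 hq1)
    _ = C * Real.exp (-a) := by rw [neg_mul, hmean]
    _ ≤ C * Real.exp (-a ^ 2 / (2 * μ)) * q ^ (μ - a) := by
        rw [mul_assoc]
        exact mul_le_mul_of_nonneg_left (Real.exp_neg_le_exp_mul_rpow ha.le haμ) hC

theorem stmt16_general (N M n : ℕ) (hM : 0 < M) (hMN : M ≤ N) (hnN : n ≤ N)
    (marked : Finset (Fin N)) (hmarked : marked.card = M)
    (a : ℝ) (ha : 0 < a) :
    ((∑ s : {s : Finset (Fin N) // s.card = n}, ((s.1 ∩ marked).card : ℝ)) /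
        (Fintype.card {s : Finset (Fin N) // s.card = n} : ℝ)
      = (M : ℝ) * n / N) ∧
    (((Finset.univ.filter (fun s : {s : Finset (Fin N) // s.card = n} =>
          ((s.1 ∩ marked).card : ℝ) < (M : ℝ) * n / N - a)).card : ℝ) /
        (Fintype.card {s : Finset (Fin N) // s.card = n} : ℝ)
      ≤ Real.exp (-(a^2) / (2 * ((M : ℝ) * n / N)))) := by
  have hcard : Fintype.card {s : Finset (Fin N) // s.card = n} = N.choose n := by
    rw [Fintype.card_finset_len, Fintype.card_fin]
  have hsum (f : Finset (Fin N) → ℝ) :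
      ∑ s : {s : Finset (Fin N) // s.card = n}, f s = ∑ s ∈ powersetCard n univ, f s :=
    (sum_subtype _ (fun _ => mem_powersetCard_univ) f).symm
  rw [hcard, hsum fun s => (#(s ∩ marked) : ℝ)]
  constructor
  · have hN : (N : ℝ) ≠ 0 := by exact_mod_cast (hM.trans_le hMN).ne'
    have hC : (N.choose n : ℝ) ≠ 0 := by exact_mod_cast (Nat.choose_pos hnN).ne'
    rw [div_eq_div_iff hC hN, ← hmarked]
    have := sum_card_inter_powersetCard_univ_mul_card n marked
    rw [Fintype.card_fin] at this
    exact_mod_cast this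
  · refine div_le_of_le_mul₀ (Nat.cast_nonneg _) (Real.exp_pos _).le ?_
    have hpgf (q : ℝ) (hq0 : 0 < q) (hq1 : q ≤ 1) :
        ∑ s : {s : Finset (Fin N) // s.card = n}, q ^ #(s.1 ∩ marked) ≤
          N.choose n * Real.exp (-(1 - q) * (M * n / N)) := by
      rw [hsum fun s => q ^ #(s ∩ marked)]
      simpa [hmarked] using sum_pow_card_inter_le marked (by simpa using hnN) hq0.le hq1
    exact (card_filter_lt_sub_le_of_sum_pow_le univ _ ha hpgf).trans_eq (mul_comm _ _)

/-- a hypergeometric random variable `HG(N, M, n)` — the number of marked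
elements in a uniformly random `n`-subset of an `N`-set with `M` marked elements — has
mean `M·n/N` and satisfies the Chernoff lower tail bound
`P(X < Mn/N − a) ≤ exp(−a²/(2·Mn/N))`. Formalized by counting over the uniform space of
`n`-subsets. -/
theorem stmt16 (N M n : ℕ) (hM : 0 < M) (hMN : M ≤ N) (hn : 0 < n) (hnN : n ≤ N)
    (marked : Finset (Fin N)) (hmarked : marked.card = M)
    (a : ℝ) (ha : 0 < a) :
    ((∑ s : {s : Finset (Fin N) // s.card = n}, ((s.1 ∩ marked).card : ℝ)) /
        (Fintype.card {s : Finset (Fin N) // s.card = n} : ℝ)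
      = (M : ℝ) * n / N) ∧
    (((Finset.univ.filter (fun s : {s : Finset (Fin N) // s.card = n} =>
          ((s.1 ∩ marked).card : ℝ) < (M : ℝ) * n / N - a)).card : ℝ) /
        (Fintype.card {s : Finset (Fin N) // s.card = n} : ℝ)
      ≤ Real.exp (-(a^2) / (2 * ((M : ℝ) * n / N)))) :=
  stmt16_general N M n hM hMN hnN marked hmarked a ha
end
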